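/- arXiv:2110.07273 — 3 statements merged into one kernel-verified Lean document; each statement's English description precedes it below -/
import Mathlib

section
/- Assume P is reflexive and vertex-spanning. Let L ≤ ℤ^d be the subgroup generated by the extreme points of P^∨, and let L* := {y ∈ ℝ^d : ⟨x, y⟩ ∈ ℤ for all x ∈ L}. Then (P^∨)^∨ = P, and the subgroup of L* generated by the extreme points of (P^∨)^∨ is exactly ℤ^d. (That is, the primitive dual of the primitive dual of P is P: primitive duality is a duality on vertex-spanning reflexive polytopes.) -/
/-!
A closed convex set containing `0` equals its bipolar: a point outside it is separated by a
hyperplane, which after rescaling is a point of the polar dual pairing below `-1` with it.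
The lattice statements are then about `P` itself: its vertices span `ℤ^d`, and since the
vertices of `P^∨` are integral, `L ⊆ ℤ^d` pairs integrally with every vertex of `P`.
-/

/-- The subgroup of `ℝ^d` consisting of vectors with integer coordinates (the lattice `ℤ^d`). -/
def intLat (d : ℕ) : AddSubgroup (Fin d → ℝ) where
  carrier := {x | ∀ i, ∃ m : ℤ, x i = m}
  zero_mem' := fun i => ⟨0, by simp⟩
  add_mem' := by
    rintro x y hx hy i
    obtain ⟨a, ha⟩ := hx i
    obtain ⟨b, hb⟩ := hy i
    exact ⟨a + b, by simp [ha, hb]⟩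
  neg_mem' := by
    rintro x hx i
    obtain ⟨a, ha⟩ := hx i
    exact ⟨-a, by simp [ha]⟩

/-- The polar dual `P^∨ = {y : ⟨x,y⟩ ≥ -1 for all x ∈ P}`. -/
def polarDual {d : ℕ} (P : Set (Fin d → ℝ)) : Set (Fin d → ℝ) :=
  {y | ∀ x ∈ P, -1 ≤ ∑ i, x i * y i}


lemma subset_polarDual_polarDual {d : ℕ} (P : Set (Fin d → ℝ)) :
    P ⊆ polarDual (polarDual P) := fun x hx y hy => by
  simpa only [mul_comm] using hy x hx

lemma exists_mem_polarDual_sum_mul_lt_of_notMem {d : ℕ} {P : Set (Fin d → ℝ)}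
    (hconv : Convex ℝ P) (hclosed : IsClosed P) (h0 : (0 : Fin d → ℝ) ∈ P)
    {z : Fin d → ℝ} (hz : z ∉ P) : ∃ y ∈ polarDual P, ∑ i, z i * y i < -1 := by
  obtain ⟨f, u, hfP, hfz⟩ := geometric_hahn_banach_closed_point hconv hclosed hz
  have hu : 0 < u := by simpa using hfP 0 h0
  -- rescale the separating functional `f` so that the separating level `u` becomes `-1`
  set y : Fin d → ℝ := fun i => -u⁻¹ * f (fun j => if i = j then 1 else 0)
  have hy : ∀ x, ∑ i, x i * y i = -u⁻¹ * f x := fun x => by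
    rw [show f x = f.toLinearMap x from rfl, f.toLinearMap.pi_apply_eq_sum_univ x, Finset.mul_sum]
    exact Finset.sum_congr rfl fun i _ => by simp only [y, smul_eq_mul, ContinuousLinearMap.coe_coe]; ring
  refine ⟨y, fun x hx => ?_, ?_⟩
  · rw [hy, neg_mul, neg_le_neg_iff, inv_mul_le_one₀ hu]
    exact (hfP x hx).le
  · rw [hy, neg_mul, neg_lt_neg_iff, lt_inv_mul_iff₀ hu, mul_one]
    exact hfz

lemma polarDual_polarDual_of_convex_of_isClosed {d : ℕ} {P : Set (Fin d → ℝ)}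
    (hconv : Convex ℝ P) (hclosed : IsClosed P) (h0 : (0 : Fin d → ℝ) ∈ P) :
    polarDual (polarDual P) = P := by
  refine (Set.Subset.antisymm ?_ (subset_polarDual_polarDual P))
  intro z hz
  by_contra hzP
  obtain ⟨y, hy, hzy⟩ := exists_mem_polarDual_sum_mul_lt_of_notMem hconv hclosed h0 hzP
  have := hz y hy
  simp only [mul_comm (y _)] at this
  linarith

lemma exists_int_sum_mul_eq_of_mem_intLat {d : ℕ} {x y : Fin d → ℝ}
    (hx : x ∈ intLat d) (hy : y ∈ intLat d) : ∃ m : ℤ, ∑ i, x i * y i = m := by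
  choose a ha using hx
  choose b hb using hy
  exact ⟨∑ i, a i * b i, by push_cast; simp only [ha, hb]⟩

theorem primitive_duality_is_duality_general (d : ℕ)
    (S : Set (Fin d → ℝ)) (hSfin : S.Finite)
    (P : Set (Fin d → ℝ)) (hP : P = convexHull ℝ S)
    (h0 : 0 ∈ interior P)
    (hreflexive : ∀ y ∈ Set.extremePoints ℝ (polarDual P), ∀ i, ∃ m : ℤ, y i = m)
    (hspan : AddSubgroup.closure (Set.extremePoints ℝ P) = intLat d)
    (L : AddSubgroup (Fin d → ℝ))
    (hL : L = AddSubgroup.closure (Set.extremePoints ℝ (polarDual P)))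
    (Lstar : Set (Fin d → ℝ))
    (hLstar : Lstar = {y | ∀ x ∈ L, ∃ m : ℤ, (∑ i, x i * y i) = m}) :
    polarDual (polarDual P) = P ∧
    Set.extremePoints ℝ (polarDual (polarDual P)) ⊆ Lstar ∧
    AddSubgroup.closure (Set.extremePoints ℝ (polarDual (polarDual P))) = intLat d := by
  have hbipolar : polarDual (polarDual P) = P := by
    subst hP
    exact polarDual_polarDual_of_convex_of_isClosed (convex_convexHull ℝ S)
      (hSfin.isCompact_convexHull ℝ).isClosed (interior_subset h0)
  have hL_int : L ≤ intLat d := hL ▸ (AddSubgroup.closure_le _).mpr hreflexive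
  have hext_int : Set.extremePoints ℝ P ⊆ intLat d :=
    hspan ▸ AddSubgroup.subset_closure
  rw [hbipolar, hLstar]
  exact ⟨rfl, fun x hx v hv => exists_int_sum_mul_eq_of_mem_intLat (hL_int hv) (hext_int hx),
    hspan⟩

/-- For a reflexive, vertex-spanning lattice polytope `P` (with `0` in its
interior), one has `(P^∨)^∨ = P`, the extreme points of `(P^∨)^∨` lie in the dual lattice
`L*` of the lattice `L` spanned by the vertices of `P^∨`, and they generate exactly `ℤ^d`:
primitive duality is a duality on vertex-spanning reflexive polytopes. -/
theorem primitive_duality_is_duality (d : ℕ) (hd : 1 ≤ d)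
    (S : Set (Fin d → ℝ)) (hSfin : S.Finite) (hSint : ∀ x ∈ S, ∀ i, ∃ m : ℤ, x i = m)
    (P : Set (Fin d → ℝ)) (hP : P = convexHull ℝ S)
    (h0 : 0 ∈ interior P)
    (hreflexive : ∀ y ∈ Set.extremePoints ℝ (polarDual P), ∀ i, ∃ m : ℤ, y i = m)
    (hspan : AddSubgroup.closure (Set.extremePoints ℝ P) = intLat d)
    (L : AddSubgroup (Fin d → ℝ))
    (hL : L = AddSubgroup.closure (Set.extremePoints ℝ (polarDual P)))
    (Lstar : Set (Fin d → ℝ))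
    (hLstar : Lstar = {y | ∀ x ∈ L, ∃ m : ℤ, (∑ i, x i * y i) = m}) :
    polarDual (polarDual P) = P ∧
    Set.extremePoints ℝ (polarDual (polarDual P)) ⊆ Lstar ∧
    AddSubgroup.closure (Set.extremePoints ℝ (polarDual (polarDual P))) = intLat d :=
  primitive_duality_is_duality_general d S hSfin P hP h0 hreflexive hspan L hL Lstar hLstar
end

section
/- For every crossing diagram c: the set of paths of c has exactly n elements, and every arrow A ∈ LQ₁ is contained in E(λ) for exactly one path λ of c. (That is, the paths of a crossing diagram form a 1-covering of the ladder quiver.) -/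
/-!
In the row at height `r - t` the path of `λ` turns at `b = λ_{t+1}` and `a = λ_t` when `b < a`
and goes straight through every other vertex it meets, so the crossing condition on that row is a
condition on the pair `(a, b)` alone. At a column where one admissible pair turns and another goes
straight the labels disagree; hence `a` is determined by `b` when `b > 0`, `b` by `a` when
`a < k`, and both by any column crossed horizontally, while admissible neighbours always exist.
So a path of `c` exists and is unique through any edge with an internal endpoint.

An arrow with an internal endpoint runs along the boundary away from that endpoint, so a
partition path containing the arrow's edge at the internal endpoint contains the whole arrow. An
arrow from `(0, 0)` to `(k, r)` avoids all internal vertices and is itself the path of a unique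
partition, for which the crossing condition is vacuous. Finally every path leaves the lower-left
boundary through exactly one of the `k + r = n` edges above `(1, 0), …, (k, 0)` or to the right
of `(0, 1), …, (0, r)`, and each of these lies on exactly one path of `c`.
-/

/-- `lam : ℕ → ℕ` is a partition in the `r × (n-r)` box, with the conventions
`lam 0 = n - r` and `lam t = 0` for `t > r` built in. -/
def IsPartition (n r : ℕ) (lam : ℕ → ℕ) : Prop :=
  lam 0 = n - r ∧ (∀ t, r < t → lam t = 0) ∧ ∀ t, lam (t + 1) ≤ lam t

/-- The edge set `E(λ)` of the monotone lattice path of the partition `λ`. -/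
def pathEdges (r : ℕ) (lam : ℕ → ℕ) : Set ((ℕ × ℕ) × Bool) :=
  {e | (∃ t, 1 ≤ t ∧ t ≤ r ∧ e = ((lam t, r - t), true)) ∨
       (∃ t x, t ≤ r ∧ lam (t + 1) ≤ x ∧ x + 1 ≤ lam t ∧ e = ((x, r - t), false))}

/-- The ladder vertices `V = {(0,0), (k,r)} ∪ {1,…,k-1} × {1,…,r-1}`. -/
def ladderV (n r : ℕ) : Set (ℕ × ℕ) :=
  {(0, 0), (n - r, r)} ∪ {p | 1 ≤ p.1 ∧ p.1 + 1 ≤ n - r ∧ 1 ≤ p.2 ∧ p.2 + 1 ≤ r}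

/-- The internal ladder vertices `V° = {1,…,k-1} × {1,…,r-1}`. -/
def internalV (n r : ℕ) : Set (ℕ × ℕ) :=
  {p | 1 ≤ p.1 ∧ p.1 + 1 ≤ n - r ∧ 1 ≤ p.2 ∧ p.2 + 1 ≤ r}

/-- `A` is an arrow of the ladder quiver. -/
def IsArrow (n r : ℕ) (A : Set ((ℕ × ℕ) × Bool)) : Prop :=
  ∃ (len : ℕ) (z : ℕ → ℕ × ℕ),
    0 < len ∧
    (∀ i < len, z (i + 1) = ((z i).1 + 1, (z i).2) ∨ z (i + 1) = ((z i).1, (z i).2 + 1)) ∧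
    (∀ i ≤ len, (z i).1 ≤ n - r ∧ (z i).2 ≤ r) ∧
    z 0 ∈ ladderV n r ∧ z len ∈ ladderV n r ∧
    (∀ i, 0 < i → i < len → z i ∉ ladderV n r) ∧
    A = {e | ∃ i < len,
          (z (i + 1) = ((z i).1 + 1, (z i).2) ∧ e = (z i, false)) ∨
          (z (i + 1) = ((z i).1, (z i).2 + 1) ∧ e = (z i, true))}

/-- The two endpoints of an edge. -/
def edgePts (e : (ℕ × ℕ) × Bool) : Set (ℕ × ℕ) :=
  {e.1, if e.2 then (e.1.1, e.1.2 + 1) else (e.1.1 + 1, e.1.2)}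

/-- `λ` is a path of the crossing diagram `c : V° → {X, O}` (here `true = X`, `false = O`):
at every internal vertex met by `E(λ)`, the path goes straight through if the label is `X`
and turns if the label is `O`. -/
def IsCrossingPath (n r : ℕ) (c : ℕ × ℕ → Bool) (lam : ℕ → ℕ) : Prop :=
  ∀ p ∈ internalV n r,
    (c p = true → ∀ e ∈ pathEdges r lam, p ∈ edgePts e →
      ∀ f ∈ pathEdges r lam, p ∈ edgePts f → e.2 = f.2) ∧
    (c p = false → ∀ e ∈ pathEdges r lam, p ∈ edgePts e →
      ∀ f ∈ pathEdges r lam, p ∈ edgePts f → e ≠ f → e.2 ≠ f.2)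

/-- The path enters the row from below at column `b = λ_{t+1}` and leaves it upwards at
column `a = λ_t`. -/
def TurnsAt (a b x : ℕ) : Prop := b < a ∧ (x = a ∨ x = b)

def GoesStraightAt (a b x : ℕ) : Prop := (x = a ∧ x = b) ∨ (b < x ∧ x < a)

def RowCompatible (k : ℕ) (c : ℕ × ℕ → Bool) (y a b : ℕ) : Prop :=
  ∀ x, 0 < x → x < k →
    (c (x, y) = true → ¬TurnsAt a b x) ∧ (c (x, y) = false → ¬GoesStraightAt a b x)

namespace RowCompatible

variable {k : ℕ} {c : ℕ × ℕ → Bool} {y a b a' b' x : ℕ}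

theorem not_goesStraightAt_of_turnsAt (h : RowCompatible k c y a b)
    (h' : RowCompatible k c y a' b') (hx : 0 < x) (hxk : x < k) (ht : TurnsAt a b x) :
    ¬GoesStraightAt a' b' x := by
  cases hc : c (x, y)
  · exact (h' x hx hxk).2 hc
  · exact absurd ht ((h x hx hxk).1 hc)

theorem top_eq_of_pos (h : RowCompatible k c y a b) (h' : RowCompatible k c y a' b)
    (hb : 0 < b) (hba : b ≤ a) (hba' : b ≤ a') (ha : a ≤ k) (ha' : a' ≤ k) : a = a' := by
  wlog hlt : a < a' generalizing a a'
  · rcases Nat.lt_or_ge a' a with h'' | h''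
    · exact (this h' h hba' hba ha' ha h'').symm
    · omega
  exfalso
  rcases hba.eq_or_lt with rfl | hba
  · exact not_goesStraightAt_of_turnsAt h' h hb (by omega) ⟨by omega, .inr rfl⟩ (.inl ⟨rfl, rfl⟩)
  · exact not_goesStraightAt_of_turnsAt h h' (by omega) (by omega) ⟨hba, .inl rfl⟩
      (.inr ⟨hba, hlt⟩)

theorem bot_eq_of_lt (h : RowCompatible k c y a b) (h' : RowCompatible k c y a b')
    (ha : a < k) (hba : b ≤ a) (hba' : b' ≤ a) : b = b' := by
  wlog hlt : b < b' generalizing b b'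
  · rcases Nat.lt_or_ge b' b with h'' | h''
    · exact (this h' h hba' hba h'').symm
    · omega
  exfalso
  rcases hba'.eq_or_lt with rfl | hba'
  · exact not_goesStraightAt_of_turnsAt h h' (by omega) ha ⟨by omega, .inl rfl⟩ (.inl ⟨rfl, rfl⟩)
  · exact not_goesStraightAt_of_turnsAt h' h (by omega) (by omega) ⟨hba', .inr rfl⟩
      (.inr ⟨hlt, hba'⟩)

theorem eq_of_le_of_lt (h : RowCompatible k c y a b) (h' : RowCompatible k c y a' b')
    (hb : b ≤ x) (hx : x < a) (ha : a ≤ k) (hb' : b' ≤ x) (hx' : x < a') (ha' : a' ≤ k) :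
    a = a' ∧ b = b' := by
  wlog hlt : a < a' ∨ (a = a' ∧ b < b') generalizing a b a' b'
  · rcases Nat.lt_trichotomy a a' with h₁ | h₁ | h₁
    · exact absurd (.inl h₁) hlt
    · rcases Nat.lt_trichotomy b b' with h₂ | h₂ | h₂
      · exact absurd (.inr ⟨h₁, h₂⟩) hlt
      · exact ⟨h₁, h₂⟩
      · exact (this h' h hb' hx' ha' hb hx ha (.inr ⟨h₁.symm, h₂⟩)).imp Eq.symm Eq.symm
    · exact (this h' h hb' hx' ha' hb hx ha (.inl h₁)).imp Eq.symm Eq.symm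
  exfalso
  rcases hlt with hlt | ⟨rfl, hlt⟩
  · exact not_goesStraightAt_of_turnsAt h h' (by omega) (by omega) ⟨by omega, .inl rfl⟩
      (.inr ⟨by omega, hlt⟩)
  · exact not_goesStraightAt_of_turnsAt h' h (by omega) (by omega) ⟨by omega, .inr rfl⟩
      (.inr ⟨hlt, by omega⟩)

theorem self (ha : a = 0 ∨ a = k ∨ c (a, y) = true) : RowCompatible k c y a a := by
  intro x hx hxk
  refine ⟨fun _ ht => ht.1.false, fun hc hs => ?_⟩
  rcases hs with ⟨rfl, -⟩ | ⟨h₁, h₂⟩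
  · rcases ha with ha | ha | ha <;> simp_all
  · omega

theorem exists_around (hx : x < k) : ∃ a b, b ≤ x ∧ x < a ∧ a ≤ k ∧ RowCompatible k c y a b := by
  have hex : ∃ a, x < a ∧ (k ≤ a ∨ c (a, y) = false) := ⟨k, hx, .inl le_rfl⟩
  obtain ⟨a, ⟨hxa, ha⟩, hak, hmin⟩ : ∃ a, (x < a ∧ (k ≤ a ∨ c (a, y) = false)) ∧ a ≤ k ∧
      ∀ x', x' < a → ¬(x < x' ∧ (k ≤ x' ∨ c (x', y) = false)) :=
    ⟨_, Nat.find_spec hex, Nat.find_min' hex ⟨hx, .inl le_rfl⟩, fun _ => Nat.find_min hex⟩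
  obtain ⟨b, hb, hbx, hmax⟩ : ∃ b, (b = 0 ∨ c (b, y) = false) ∧ b ≤ x ∧
      ∀ x', b < x' → x' ≤ x → ¬(x' = 0 ∨ c (x', y) = false) :=
    ⟨_, Nat.findGreatest_spec (P := fun b => b = 0 ∨ c (b, y) = false) (Nat.zero_le x) (.inl rfl),
      Nat.findGreatest_le x, fun _ => Nat.findGreatest_is_greatest⟩
  refine ⟨a, b, hbx, hxa, hak, fun x' hx' hx'k => ⟨fun hc ht => ?_, fun hc hs => ?_⟩⟩
  · rcases ht.2 with rfl | rfl
    · rcases ha with h | h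
      · omega
      · simp_all
    · rcases hb with h | h
      · omega
      · simp_all
  · rcases hs with ⟨rfl, rfl⟩ | ⟨h₁, h₂⟩
    · omega
    · rcases Nat.lt_or_ge x x' with h | h
      · exact hmin x' h₂ ⟨h, .inr hc⟩
      · exact hmax x' h₁ h (.inr hc)

theorem exists_top (hb : b ≤ k) : ∃ a, b ≤ a ∧ a ≤ k ∧ RowCompatible k c y a b := by
  by_cases hself : b = 0 ∨ b = k ∨ c (b, y) = true
  · exact ⟨b, le_rfl, hb, self hself⟩
  simp only [not_or, Bool.not_eq_true] at hself
  obtain ⟨a, b', hb', hba, hak, h⟩ := exists_around (c := c) (y := y) (by omega : b < k)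
  have : b' = b := by
    by_contra hne
    exact (h b (by omega) (by omega)).2 hself.2.2 (.inr ⟨by omega, hba⟩)
  exact ⟨a, hba.le, hak, this ▸ h⟩

theorem exists_bot (ha : a ≤ k) : ∃ b ≤ a, RowCompatible k c y a b := by
  by_cases hself : a = 0 ∨ a = k ∨ c (a, y) = true
  · exact ⟨a, le_rfl, self hself⟩
  simp only [not_or, Bool.not_eq_true] at hself
  obtain ⟨a', b, hb, hba, hak, h⟩ := exists_around (c := c) (y := y) (by omega : a - 1 < k)
  have : a' = a := by
    by_contra hne
    exact (h a (by omega) (by omega)).2 hself.2.2 (.inr ⟨by omega, by omega⟩)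
  exact ⟨b, by omega, this ▸ h⟩

end RowCompatible

section

variable {n r : ℕ} {c : ℕ × ℕ → Bool} {lam lam' : ℕ → ℕ} {t x y a b i j : ℕ} {p q : ℕ × ℕ}
  {e : (ℕ × ℕ) × Bool} {z : ℕ → ℕ × ℕ} {len : ℕ}

def edgeHead (e : (ℕ × ℕ) × Bool) : ℕ × ℕ :=
  if e.2 then (e.1.1, e.1.2 + 1) else (e.1.1 + 1, e.1.2)

def pathVertices (r : ℕ) (lam : ℕ → ℕ) : Set (ℕ × ℕ) :=
  {p | p.2 ≤ r ∧ lam (r - p.2 + 1) ≤ p.1 ∧ p.1 ≤ lam (r - p.2)}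

theorem IsPartition.antitone (h : IsPartition n r lam) : Antitone lam :=
  antitone_nat_of_succ_le h.2.2

theorem IsPartition.le (h : IsPartition n r lam) (t : ℕ) : lam t ≤ n - r :=
  h.1 ▸ h.antitone (Nat.zero_le t)

theorem mem_pathVertices :
    p ∈ pathVertices r lam ↔ p.2 ≤ r ∧ lam (r - p.2 + 1) ≤ p.1 ∧ p.1 ≤ lam (r - p.2) :=
  Iff.rfl

theorem mem_pathEdges_true :
    ((x, y), true) ∈ pathEdges r lam ↔ y < r ∧ lam (r - y) = x := by
  simp only [pathEdges, Set.mem_ofPred_eq, Prod.mk.injEq]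
  constructor
  · rintro (⟨t, ht₁, ht, ⟨rfl, rfl⟩, -⟩ | ⟨-, -, -, -, -, -, h⟩)
    · exact ⟨by omega, by rw [Nat.sub_sub_self ht]⟩
    · exact absurd h (by decide)
  · rintro ⟨h, rfl⟩
    exact .inl ⟨r - y, by omega, by omega, ⟨rfl, by omega⟩, trivial⟩

theorem mem_pathEdges_false :
    ((x, y), false) ∈ pathEdges r lam ↔ y ≤ r ∧ lam (r - y + 1) ≤ x ∧ x < lam (r - y) := by
  simp only [pathEdges, Set.mem_ofPred_eq, Prod.mk.injEq]
  constructor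
  · rintro (⟨-, -, -, -, h⟩ | ⟨t, x, ht, h₁, h₂, ⟨rfl, rfl⟩, -⟩)
    · exact absurd h (by decide)
    · exact ⟨by omega, by rwa [Nat.sub_sub_self ht], by rw [Nat.sub_sub_self ht]; omega⟩
  · rintro ⟨h, h₁, h₂⟩
    exact .inr ⟨r - y, x, by omega, h₁, h₂, ⟨rfl, by omega⟩, trivial⟩

theorem IsPartition.mem_pathEdges_iff (h : IsPartition n r lam) :
    e ∈ pathEdges r lam ↔ e.1 ∈ pathVertices r lam ∧ edgeHead e ∈ pathVertices r lam := by
  obtain ⟨⟨x, y⟩, _ | _⟩ := e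
  · simp only [mem_pathEdges_false, edgeHead, mem_pathVertices, Bool.false_eq_true, if_false]
    omega
  · simp only [mem_pathEdges_true, edgeHead, mem_pathVertices, if_true]
    have h₁ := h.2.2 (r - y)
    have h₂ := h.2.2 (r - (y + 1))
    rcases Nat.lt_or_ge y r with h₃ | h₃
    · rw [show r - (y + 1) + 1 = r - y by omega] at h₂ ⊢
      omega
    · omega

theorem mem_edgePts_iff (hx : 0 < p.1) (hy : 0 < p.2) :
    p ∈ edgePts e ↔
      e = (p, true) ∨ e = ((p.1, p.2 - 1), true) ∨ e = (p, false) ∨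
        e = ((p.1 - 1, p.2), false) := by
  obtain ⟨⟨x, y⟩, _ | _⟩ := e <;> obtain ⟨px, py⟩ := p <;>
    simp only [edgePts, Set.mem_insert_iff, Set.mem_singleton_iff, Prod.mk.injEq,
      Bool.false_eq_true, if_false, if_true, reduceCtorEq, and_false, and_true, false_or,
      or_false] at hx hy ⊢ <;>
    omega

theorem forall_edgePts_snd_eq_iff {E : Set ((ℕ × ℕ) × Bool)} (hx : 0 < p.1) (hy : 0 < p.2) :
    (∀ e ∈ E, p ∈ edgePts e → ∀ f ∈ E, p ∈ edgePts f → e.2 = f.2) ↔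
      ¬(((p, true) ∈ E ∨ ((p.1, p.2 - 1), true) ∈ E) ∧
        ((p, false) ∈ E ∨ ((p.1 - 1, p.2), false) ∈ E)) := by
  constructor
  · rintro h ⟨hv | hv, hh | hh⟩ <;>
      exact absurd (h _ hv (by simp [mem_edgePts_iff hx hy]) _ hh (by simp [mem_edgePts_iff hx hy]))
        (by simp)
  · intro h e he hpe f hf hpf
    rw [mem_edgePts_iff hx hy] at hpe hpf
    rcases hpe with rfl | rfl | rfl | rfl <;> rcases hpf with rfl | rfl | rfl | rfl <;>
      first | rfl | (exfalso; tauto)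

theorem forall_edgePts_snd_ne_iff {E : Set ((ℕ × ℕ) × Bool)} (hx : 0 < p.1) (hy : 0 < p.2) :
    (∀ e ∈ E, p ∈ edgePts e → ∀ f ∈ E, p ∈ edgePts f → e ≠ f → e.2 ≠ f.2) ↔
      ¬((p, true) ∈ E ∧ ((p.1, p.2 - 1), true) ∈ E) ∧
        ¬((p, false) ∈ E ∧ ((p.1 - 1, p.2), false) ∈ E) := by
  have hv : (p, true) ≠ ((p.1, p.2 - 1), true) := by simp [Prod.ext_iff]; omega
  have hh : (p, false) ≠ ((p.1 - 1, p.2), false) := by simp [Prod.ext_iff]; omega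
  constructor
  · intro h
    exact ⟨fun ⟨h₁, h₂⟩ => h _ h₁ (by simp [mem_edgePts_iff hx hy]) _ h₂
        (by simp [mem_edgePts_iff hx hy]) hv rfl,
      fun ⟨h₁, h₂⟩ => h _ h₁ (by simp [mem_edgePts_iff hx hy]) _ h₂
        (by simp [mem_edgePts_iff hx hy]) hh rfl⟩
  · rintro ⟨h₁, h₂⟩ e he hpe f hf hpf hne
    rw [mem_edgePts_iff hx hy] at hpe hpf
    rcases hpe with rfl | rfl | rfl | rfl <;> rcases hpf with rfl | rfl | rfl | rfl <;>
      first | exact absurd rfl hne | (exfalso; tauto) | simp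

def IsCompatiblePartition (n r : ℕ) (c : ℕ × ℕ → Bool) (lam : ℕ → ℕ) : Prop :=
  IsPartition n r lam ∧
    ∀ t, 1 ≤ t → t + 1 ≤ r → RowCompatible (n - r) c (r - t) (lam t) (lam (t + 1))

theorem IsPartition.crossingAt_iff (h : IsPartition n r lam) (hx : 0 < x) (hy : 0 < y)
    (hyr : y < r) :
    ((∀ e ∈ pathEdges r lam, (x, y) ∈ edgePts e →
        ∀ f ∈ pathEdges r lam, (x, y) ∈ edgePts f → e.2 = f.2) ↔
      ¬TurnsAt (lam (r - y)) (lam (r - y + 1)) x) ∧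
    ((∀ e ∈ pathEdges r lam, (x, y) ∈ edgePts e →
        ∀ f ∈ pathEdges r lam, (x, y) ∈ edgePts f → e ≠ f → e.2 ≠ f.2) ↔
      ¬GoesStraightAt (lam (r - y)) (lam (r - y + 1)) x) := by
  rw [forall_edgePts_snd_eq_iff hx hy, forall_edgePts_snd_ne_iff hx hy]
  simp only [mem_pathEdges_true, mem_pathEdges_false, show r - (y - 1) = r - y + 1 by omega]
  have := h.2.2 (r - y)
  unfold TurnsAt GoesStraightAt
  constructor <;> omega

theorem isPartition_and_isCrossingPath_iff :
    IsPartition n r lam ∧ IsCrossingPath n r c lam ↔ IsCompatiblePartition n r c lam := by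
  refine and_congr_right fun h => ⟨fun hC t ht htr x hx hxk => ?_, fun hR ⟨x, y⟩ hp => ?_⟩
  · have key := h.crossingAt_iff (x := x) (y := r - t) hx (by omega) (by omega)
    rw [Nat.sub_sub_self (by omega)] at key
    rw [← key.1, ← key.2]
    exact hC (x, r - t) ⟨hx, by omega, by omega, by omega⟩
  · obtain ⟨hx, hxk, hy, hyr⟩ := hp
    rw [(h.crossingAt_iff hx hy hyr).1, (h.crossingAt_iff hx hy hyr).2]
    have := hR (r - y) (by omega) (by omega) x hx (by omega)
    rwa [Nat.sub_sub_self (by omega)] at this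

theorem IsCompatiblePartition.eq_of_le_of_pos (h : IsCompatiblePartition n r c lam)
    (h' : IsCompatiblePartition n r c lam') (heq : lam t = lam' t) (hpos : 0 < lam t) :
    ∀ u ≤ t, lam u = lam' u := by
  intro u hu
  induction hu using Nat.decreasingInduction with
  | self => exact heq
  | of_succ u hut ih =>
    have hpos' : 0 < lam (u + 1) := lt_of_lt_of_le hpos (h.1.antitone hut)
    rcases Nat.eq_zero_or_pos u with rfl | hu
    · rw [h.1.1, h'.1.1]
    by_cases hur : u + 1 ≤ r
    · exact (h.2 u hu hur).top_eq_of_pos (ih ▸ h'.2 u hu hur) hpos' (h.1.2.2 u)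
        (ih ▸ h'.1.2.2 u) (h.1.le u) (h'.1.le u)
    · exact absurd (h.1.2.1 (u + 1) (by omega)) hpos'.ne'

theorem IsCompatiblePartition.eq_of_ge_of_lt (h : IsCompatiblePartition n r c lam)
    (h' : IsCompatiblePartition n r c lam') (ht : 1 ≤ t) (heq : lam t = lam' t)
    (hlt : lam t < n - r) : ∀ u, t ≤ u → lam u = lam' u := by
  intro u hu
  induction u, hu using Nat.le_induction with
  | base => exact heq
  | succ u htu ih =>
    by_cases hur : u + 1 ≤ r
    · exact (h.2 u (by omega) hur).bot_eq_of_lt (ih ▸ h'.2 u (by omega) hur)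
        (lt_of_le_of_lt (h.1.antitone htu) hlt) (h.1.2.2 u) (ih ▸ h'.1.2.2 u)
    · rw [h.1.2.1 (u + 1) (by omega), h'.1.2.1 (u + 1) (by omega)]

theorem exists_compatible_head (ht : 1 ≤ t) (htr : t ≤ r) (hx : x ≤ n - r) :
    ∃ f : ℕ → ℕ, f 0 = n - r ∧ f t = x ∧ (∀ u < t, f (u + 1) ≤ f u) ∧
      ∀ u, 1 ≤ u → u + 1 ≤ t → RowCompatible (n - r) c (r - u) (f u) (f (u + 1)) := by
  induction t, ht using Nat.le_induction generalizing x with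
  | base =>
    refine ⟨fun u => if u = 0 then n - r else x, rfl, rfl, fun u hu => ?_, fun u _ _ => by omega⟩
    obtain rfl : u = 0 := by omega
    simpa using hx
  | succ t ht ih =>
    obtain ⟨a, hxa, hak, hrow⟩ := RowCompatible.exists_top (c := c) (y := r - t) hx
    obtain ⟨f, hf0, hft, hanti, hrows⟩ := ih (by omega) hak
    refine ⟨fun u => if u = t + 1 then x else f u, by simpa using hf0, by simp,
      fun u hu => ?_, fun u hu hut => ?_⟩
    · rcases Nat.lt_or_ge u t with h | h
      · simpa [show u ≠ t + 1 by omega, show u ≠ t by omega] using hanti u h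
      · obtain rfl : u = t := by omega
        simpa [hft] using hxa
    · rcases Nat.lt_or_ge u t with h | h
      · simpa [show u ≠ t + 1 by omega, show u ≠ t by omega] using hrows u hu (by omega)
      · obtain rfl : u = t := by omega
        simpa [hft] using hrow

theorem exists_compatible_tail (htr : t ≤ r + 1) (hx : x ≤ n - r) (hx0 : t = r + 1 → x = 0) :
    ∃ g : ℕ → ℕ, g t = x ∧ (∀ u ≥ t, g (u + 1) ≤ g u) ∧ (∀ u, r < u → g u = 0) ∧
      ∀ u, t ≤ u → 1 ≤ u → u + 1 ≤ r → RowCompatible (n - r) c (r - u) (g u) (g (u + 1)) := by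
  induction htr using Nat.decreasingInduction generalizing x with
  | self =>
    exact ⟨fun _ => 0, (hx0 rfl).symm, fun _ _ => le_rfl, fun _ _ => rfl,
      fun u hu _ hur => by omega⟩
  | of_succ t htr ih =>
    obtain ⟨b, hbx, hrow, hb0⟩ : ∃ b ≤ x, (t + 1 ≤ r → RowCompatible (n - r) c (r - t) x b) ∧
        (t + 1 = r + 1 → b = 0) := by
      rcases Nat.lt_or_ge t r with h | h
      · obtain ⟨b, hbx, hrow⟩ := RowCompatible.exists_bot (c := c) (y := r - t) hx
        exact ⟨b, hbx, fun _ => hrow, by omega⟩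
      · exact ⟨0, Nat.zero_le x, by omega, fun _ => rfl⟩
    obtain ⟨g, hgt, hanti, hzero, hrows⟩ := ih (hbx.trans hx) hb0
    refine ⟨fun u => if u = t then x else g u, by simp, fun u hu => ?_, fun u hu => ?_,
      fun u hu hu1 hur => ?_⟩
    · rcases hu.eq_or_lt with rfl | h
      · simpa [hgt] using hbx
      · simpa [show u ≠ t by omega, show u + 1 ≠ t by omega] using hanti u h
    · simpa [show u ≠ t by omega] using hzero u hu
    · rcases hu.eq_or_lt with rfl | h
      · simpa [hgt] using hrow hur
      · simpa [show u ≠ t by omega, show u + 1 ≠ t by omega] using hrows u h hu1 hur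

theorem exists_isCompatiblePartition (ht : 1 ≤ t) (htr : t ≤ r) (hba : b ≤ a) (ha : a ≤ n - r)
    (hrow : t + 1 ≤ r → RowCompatible (n - r) c (r - t) a b) (hb : t = r → b = 0) :
    ∃ lam, IsCompatiblePartition n r c lam ∧ lam t = a ∧ lam (t + 1) = b := by
  obtain ⟨f, hf0, hft, hfanti, hfrows⟩ := exists_compatible_head (c := c) ht htr ha
  obtain ⟨g, hgt, hganti, hgzero, hgrows⟩ :=
    exists_compatible_tail (c := c) (t := t + 1) (by omega) (hba.trans ha) (fun h => hb (by omega))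
  refine ⟨fun u => if u ≤ t then f u else g u, ⟨⟨by simpa using hf0, fun u hu => ?_, fun u => ?_⟩,
    fun u hu hur => ?_⟩, by simpa using hft, by simpa using hgt⟩
  · simpa [show ¬u ≤ t by omega] using hgzero u hu
  · rcases Nat.lt_trichotomy u t with h | rfl | h
    · simpa [show u ≤ u + 1 by omega, show u + 1 ≤ t by omega, h.le] using hfanti u h
    · simpa [hft, hgt] using hba
    · simpa [show ¬u ≤ t by omega, show ¬u + 1 ≤ t by omega] using hganti u h
  · rcases Nat.lt_trichotomy u t with h | rfl | h
    · simpa [show u + 1 ≤ t by omega, h.le] using hfrows u hu h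
    · simpa [hft, hgt] using hrow hur
    · simpa [show ¬u ≤ t by omega, show ¬u + 1 ≤ t by omega] using hgrows u h hu hur

theorem existsUnique_isCompatiblePartition_eq (ht : 1 ≤ t) (htr : t ≤ r) (hx : x ≤ n - r)
    (hup : t = 1 ∨ 0 < x) (hdown : t = r ∨ x < n - r) :
    ∃! lam, IsCompatiblePartition n r c lam ∧ lam t = x := by
  obtain ⟨b, hbx, hrow, hb⟩ : ∃ b ≤ x, (t + 1 ≤ r → RowCompatible (n - r) c (r - t) x b) ∧
      (t = r → b = 0) := by
    rcases Nat.lt_or_ge t r with h | h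
    · obtain ⟨b, hbx, hrow⟩ := RowCompatible.exists_bot (c := c) (y := r - t) hx
      exact ⟨b, hbx, fun _ => hrow, by omega⟩
    · exact ⟨0, Nat.zero_le x, by omega, fun _ => rfl⟩
  obtain ⟨lam, hlam, hlamt, -⟩ := exists_isCompatiblePartition ht htr hbx hx hrow hb
  refine ⟨lam, ⟨hlam, hlamt⟩, fun lam' ⟨h', h't⟩ => funext fun u => ?_⟩
  have heq : lam' t = lam t := h't.trans hlamt.symm
  rcases le_or_gt u t with hu | hu
  · rcases hup with rfl | hpos
    · rcases Nat.le_one_iff_eq_zero_or_eq_one.1 hu with rfl | rfl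
      · rw [h'.1.1, hlam.1.1]
      · exact heq
    · exact h'.eq_of_le_of_pos hlam heq (h't ▸ hpos) u hu
  · rcases hdown with rfl | hlt
    · rw [h'.1.2.1 u hu, hlam.1.2.1 u hu]
    · exact h'.eq_of_ge_of_lt hlam ht heq (h't ▸ hlt) u hu.le

theorem existsUnique_isCompatiblePartition_around (ht : 1 ≤ t) (htr : t + 1 ≤ r) (hx : x < n - r) :
    ∃! lam, IsCompatiblePartition n r c lam ∧ lam (t + 1) ≤ x ∧ x < lam t := by
  obtain ⟨a, b, hbx, hxa, ha, hrow⟩ := RowCompatible.exists_around (c := c) (y := r - t) hx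
  obtain ⟨lam, hlam, hlamt, hlamt'⟩ :=
    exists_isCompatiblePartition ht (by omega) (by omega) ha (fun _ => hrow) (by omega)
  refine ⟨lam, ⟨hlam, hlamt' ▸ hbx, hlamt ▸ hxa⟩, fun lam' ⟨h', hb', hx'⟩ => funext fun u => ?_⟩
  obtain ⟨heq, heq'⟩ := (h'.2 t ht htr).eq_of_le_of_lt (hlam.2 t ht htr) hb' hx' (h'.1.le t)
    (hlamt' ▸ hbx) (hlamt ▸ hxa) (hlam.1.le t)
  rcases le_or_gt u t with hu | hu
  · exact h'.eq_of_le_of_pos hlam heq (by omega) u hu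
  · exact h'.eq_of_ge_of_lt hlam (by omega) heq' (by omega) u hu

/-- The path leaves the lower-left boundary of the box either along the vertical edge above
`(i + 1, 0)` (when `i < k`) or along the horizontal edge to the right of `(0, r - (i - k))`. -/
def EntersAt (k r : ℕ) (lam : ℕ → ℕ) (i : ℕ) : Prop :=
  (i < k ∧ lam r = i + 1) ∨ (k ≤ i ∧ lam (i - k + 1) = 0 ∧ 0 < lam (i - k))

theorem IsPartition.le_of_entersAt (h : IsPartition n r lam) (hi : EntersAt (n - r) r lam i)
    (hj : EntersAt (n - r) r lam j) (hin : i < n) : i ≤ j := by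
  by_contra! hji
  rcases hi with ⟨hik, hi⟩ | ⟨hik, hi₁, hi₂⟩ <;> rcases hj with ⟨hjk, hj⟩ | ⟨hjk, hj₁, hj₂⟩
  · omega
  · omega
  · have := h.antitone (show i - (n - r) + 1 ≤ r by omega)
    omega
  · have := h.antitone (show j - (n - r) + 1 ≤ i - (n - r) by omega)
    omega

theorem IsPartition.exists_entersAt (h : IsPartition n r lam) (hrn : r < n) :
    ∃ i < n, EntersAt (n - r) r lam i := by
  rcases (Nat.eq_zero_or_pos (lam r)).symm with hpos | hr0
  · exact ⟨lam r - 1, by have := h.le r; omega, .inl ⟨by have := h.le r; omega, by omega⟩⟩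
  -- the lowest row (largest `t`) in which the path is off the left wall
  set s := Nat.findGreatest (fun t => 0 < lam t) r with hs
  have hsr : s ≤ r := Nat.findGreatest_le r
  have hs1 : lam (s + 1) = 0 := by
    by_cases hsr' : s + 1 ≤ r
    · exact Nat.eq_zero_of_not_pos
        (Nat.findGreatest_is_greatest (P := fun t => 0 < lam t) (by omega) hsr')
    · exact h.2.1 _ (by omega)
  have hs0 : 0 < lam s := by
    rcases Nat.eq_zero_or_pos s with hs0 | hs0
    · rw [hs0, h.1]; omega
    · exact Nat.findGreatest_of_ne_zero (P := fun t => 0 < lam t) hs.symm hs0.ne'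
  have : s ≠ r := fun h' => by rw [h'] at hs0; omega
  exact ⟨n - r + s, by omega, .inr ⟨by omega, by simpa using hs1, by simpa using hs0⟩⟩

theorem IsPartition.existsUnique_entersAt (h : IsPartition n r lam) (hrn : r < n) :
    ∃! i, i < n ∧ EntersAt (n - r) r lam i := by
  obtain ⟨i, hin, hi⟩ := h.exists_entersAt hrn
  exact ⟨i, ⟨hin, hi⟩, fun j ⟨hjn, hj⟩ =>
    le_antisymm (h.le_of_entersAt hj hi hjn) (h.le_of_entersAt hi hj hin)⟩

theorem existsUnique_isCompatiblePartition_entersAt (hr : 1 ≤ r) (hrn : r < n) (hi : i < n) :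
    ∃! lam, IsCompatiblePartition n r c lam ∧ EntersAt (n - r) r lam i := by
  rcases Nat.lt_trichotomy i (n - r) with hik | rfl | hik
  · refine (existsUnique_congr fun lam => and_congr_right fun _ => ?_).1
      (existsUnique_isCompatiblePartition_eq (c := c) (t := r) (x := i + 1) hr le_rfl (by omega)
        (.inr (by omega)) (.inl rfl))
    unfold EntersAt
    omega
  · refine (existsUnique_congr fun lam => and_congr_right fun h => ?_).1
      (existsUnique_isCompatiblePartition_eq (c := c) (t := 1) (x := 0) le_rfl hr (Nat.zero_le _)
        (.inl rfl) (.inr (by omega)))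
    have := h.1.1
    unfold EntersAt
    simp only [Nat.sub_self, zero_add]
    omega
  · refine (existsUnique_congr fun lam => and_congr_right fun _ => ?_).1
      (existsUnique_isCompatiblePartition_around (c := c) (t := i - (n - r)) (x := 0) (by omega)
        (by omega) (by omega))
    unfold EntersAt
    omega

theorem ncard_setOf_isCrossingPath (hr : 1 ≤ r) (hrn : r < n) :
    {lam | IsPartition n r lam ∧ IsCrossingPath n r c lam}.ncard = n := by
  simp only [isPartition_and_isCrossingPath_iff]
  have hex := fun i (hi : i < n) => existsUnique_isCompatiblePartition_entersAt (c := c) hr hrn hi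
  refine Set.ncard_eq_of_bijective (fun i hi => (hex i hi).exists.choose) (fun lam hlam => ?_)
    (fun i hi => (hex i hi).exists.choose_spec.1) (fun i j hi hj hij => ?_)
  · obtain ⟨i, ⟨hi, hent⟩, -⟩ := hlam.1.existsUnique_entersAt hrn
    exact ⟨i, hi, (hex i hi).unique (hex i hi).exists.choose_spec ⟨hlam, hent⟩⟩
  · have hspec := (hex i hi).exists.choose_spec
    have hspec' := (hex j hj).exists.choose_spec
    rw [← hij] at hspec'
    exact hspec.1.1.existsUnique_entersAt hrn |>.unique ⟨hi, hspec.2⟩ ⟨hj, hspec'.2⟩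

def IsWalk (z : ℕ → ℕ × ℕ) (len : ℕ) : Prop :=
  ∀ i < len, z (i + 1) = ((z i).1 + 1, (z i).2) ∨ z (i + 1) = ((z i).1, (z i).2 + 1)

def walkEdges (z : ℕ → ℕ × ℕ) (len : ℕ) : Set ((ℕ × ℕ) × Bool) :=
  {e | ∃ i < len, e.1 = z i ∧ edgeHead e = z (i + 1)}

theorem walkEdges_eq :
    {e | ∃ i < len,
      (z (i + 1) = ((z i).1 + 1, (z i).2) ∧ e = (z i, false)) ∨
      (z (i + 1) = ((z i).1, (z i).2 + 1) ∧ e = (z i, true))} = walkEdges z len := by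
  ext ⟨p, _ | _⟩ <;>
    simp only [walkEdges, edgeHead, Set.mem_ofPred_eq, Prod.mk.injEq, and_true, and_false,
      or_false, false_or, Bool.false_eq_true, reduceCtorEq, if_true, if_false] <;>
    exact exists_congr fun i => and_congr_right fun _ => ⟨fun ⟨h₁, h₂⟩ => ⟨h₂, h₂ ▸ h₁.symm⟩,
      fun ⟨h₁, h₂⟩ => ⟨h₁ ▸ h₂.symm, h₁⟩⟩

theorem IsWalk.le (hz : IsWalk z len) (hij : i ≤ j) (hj : j ≤ len) : z i ≤ z j := by
  induction j, hij using Nat.le_induction with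
  | base => exact le_rfl
  | succ j _ ih =>
    refine (ih (by omega)).trans ?_
    rcases hz j (by omega) with h | h <;> rw [h, Prod.le_def] <;> omega

theorem IsWalk.add_eq (hz : IsWalk z len) (hi : i ≤ len) :
    (z i).1 + (z i).2 = (z 0).1 + (z 0).2 + i := by
  induction i with
  | zero => rfl
  | succ i ih =>
    have := ih (by omega)
    rcases hz i (by omega) with h | h <;> rw [h] <;> simp only <;> omega

theorem IsWalk.exists_mem_walkEdges (hz : IsWalk z len) (hi : i < len) :
    ∃ e ∈ walkEdges z len, e.1 = z i ∧ edgeHead e = z (i + 1) := by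
  rcases hz i hi with h | h
  · exact ⟨(z i, false), ⟨i, hi, rfl, h.symm⟩, rfl, h.symm⟩
  · exact ⟨(z i, true), ⟨i, hi, rfl, h.symm⟩, rfl, h.symm⟩

theorem IsPartition.walkEdges_subset_iff (h : IsPartition n r lam) (hz : IsWalk z len)
    (hlen : 0 < len) :
    walkEdges z len ⊆ pathEdges r lam ↔ ∀ i ≤ len, z i ∈ pathVertices r lam := by
  constructor
  · intro hsub i hi
    rcases hi.lt_or_eq with hi | rfl
    · obtain ⟨e, he, he₁, -⟩ := hz.exists_mem_walkEdges hi
      exact he₁ ▸ (h.mem_pathEdges_iff.1 (hsub he)).1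
    · obtain ⟨e, he, -, he₂⟩ := hz.exists_mem_walkEdges (Nat.sub_one_lt hlen.ne')
      rw [Nat.sub_add_cancel hlen] at he₂
      exact he₂ ▸ (h.mem_pathEdges_iff.1 (hsub he)).2
  · rintro hV e ⟨i, hi, he₁, he₂⟩
    exact h.mem_pathEdges_iff.2 ⟨he₁ ▸ hV i hi.le, he₂ ▸ hV (i + 1) hi⟩

theorem IsPartition.mem_pathVertices_of_le_of_lowerLeft (h : IsPartition n r lam)
    (hp : p ∈ pathVertices r lam) (hqp : q ≤ p) (hwall : p.1 = 0 ∨ p.2 = 0) :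
    q ∈ pathVertices r lam := by
  obtain ⟨x, y⟩ := p
  obtain ⟨x', y'⟩ := q
  simp only [mem_pathVertices, Prod.mk_le_mk] at hp hqp hwall ⊢
  rcases hwall with rfl | rfl
  · have := h.antitone (show r - y + 1 ≤ r - y' + 1 by omega)
    omega
  · obtain rfl : y' = 0 := by omega
    have := h.2.1 (r + 1) (by omega)
    simp only [Nat.sub_zero] at hp ⊢
    omega

theorem IsPartition.mem_pathVertices_of_le_of_upperRight (h : IsPartition n r lam)
    (hp : p ∈ pathVertices r lam) (hpq : p ≤ q) (hq : q ≤ (n - r, r))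
    (hwall : p.1 = n - r ∨ p.2 = r) : q ∈ pathVertices r lam := by
  obtain ⟨x, y⟩ := p
  obtain ⟨x', y'⟩ := q
  simp only [mem_pathVertices, Prod.mk_le_mk] at hp hpq hq hwall ⊢
  have := h.le (r - y' + 1)
  rcases hwall with rfl | rfl
  · have := h.antitone (show r - y' ≤ r - y by omega)
    omega
  · obtain rfl : y' = y := by omega
    have := h.1
    simp only [Nat.sub_self] at hp ⊢
    omega

theorem IsPartition.le_of_mem_pathVertices (h : IsPartition n r lam)
    (hp : p ∈ pathVertices r lam) : p ≤ (n - r, r) :=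
  Prod.le_def.2 ⟨hp.2.2.trans (h.le _), hp.1⟩

theorem IsPartition.mem_pathVertices_of_mem_edgePts (h : IsPartition n r lam)
    (he : e ∈ pathEdges r lam) (hp : p ∈ edgePts e) :
    p ∈ pathVertices r lam := by
  rcases hp with rfl | hp
  · exact (h.mem_pathEdges_iff.1 he).1
  · exact (Set.mem_singleton_iff.1 hp) ▸ (h.mem_pathEdges_iff.1 he).2

theorem IsPartition.eq_of_mem_pathVertices (h : IsPartition n r lam)
    (hp : p ∈ pathVertices r lam) (hq : q ∈ pathVertices r lam) (hpq : p.1 + p.2 = q.1 + q.2) :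
    p = q := by
  wlog hle : p.2 ≤ q.2 generalizing p q
  · exact (this hq hp hpq.symm (by omega)).symm
  rcases hle.eq_or_lt with h₂ | h₂
  · exact Prod.ext (by omega) h₂
  · have := hq.1
    have := h.antitone (show r - q.2 + 1 ≤ r - p.2 by omega)
    have := hp.2.2
    have := hq.2.1
    omega

theorem IsPartition.eq_of_pathVertices_subset (h : IsPartition n r lam)
    (h' : IsPartition n r lam') (hsub : pathVertices r lam ⊆ pathVertices r lam') :
    lam = lam' := by
  funext t
  rcases Nat.eq_zero_or_pos t with rfl | ht
  · rw [h.1, h'.1]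
  by_cases htr : t ≤ r
  · have hlow := hsub (show (lam t, r - t) ∈ pathVertices r lam by
      simp only [mem_pathVertices, Nat.sub_sub_self htr]
      exact ⟨by omega, h.2.2 t, le_rfl⟩)
    have hhigh := hsub (show (lam t, r - t + 1) ∈ pathVertices r lam by
      simp only [mem_pathVertices, show r - (r - t + 1) = t - 1 by omega,
        show t - 1 + 1 = t by omega]
      exact ⟨by omega, le_rfl, h.antitone (by omega)⟩)
    simp only [mem_pathVertices, Nat.sub_sub_self htr, show r - (r - t + 1) = t - 1 by omega,
      show t - 1 + 1 = t by omega] at hlow hhigh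
    omega
  · rw [h.2.1 t (by omega), h'.2.1 t (by omega)]

theorem IsPartition.isCrossingPath_of_disjoint (h : IsPartition n r lam)
    (hdisj : ∀ p ∈ pathVertices r lam, p ∉ internalV n r) : IsCrossingPath n r c lam := by
  intro p hp
  have hoff : ∀ e ∈ pathEdges r lam, p ∉ edgePts e := fun e he hpe =>
    hdisj p (h.mem_pathVertices_of_mem_edgePts he hpe) hp
  exact ⟨fun _ e he hpe => absurd hpe (hoff e he), fun _ e he hpe => absurd hpe (hoff e he)⟩

theorem IsPartition.exists_turn_up (h : IsPartition n r lam) (hy : y < r)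
    (hxy : (x, y) ∈ pathVertices r lam) (hk : lam (r - y) = n - r) :
    ∃ lam', IsPartition n r lam' ∧
      (∀ p ∈ pathVertices r lam, p.2 < y ∨ (p.2 = y ∧ p.1 ≤ x) → p ∈ pathVertices r lam') ∧
      (x, y + 1) ∈ pathVertices r lam' ∧ lam' (r - (y + 1)) = n - r := by
  obtain ⟨-, hx₁, hx₂⟩ : y ≤ r ∧ lam (r - y + 1) ≤ x ∧ x ≤ lam (r - y) := hxy
  have hk' : lam (r - (y + 1)) = n - r :=
    le_antisymm (h.le _) (hk ▸ h.antitone (by omega))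
  refine ⟨fun t => if t = r - y then x else lam t,
    ⟨by simp [show 0 ≠ r - y by omega, h.1],
      fun t ht => by simp [show t ≠ r - y by omega, h.2.1 t ht], fun t => ?_⟩,
    fun p hp hpy => ?_, ?_, by simp [show r - (y + 1) ≠ r - y by omega, hk']⟩
  · have := h.2.2 t
    by_cases ht : t = r - y
    · simp only [ht, if_true, show r - y + 1 ≠ r - y by omega, if_false]
      omega
    · simp only [ht, if_false]
      split_ifs with ht'
      · have := h.antitone (show t ≤ r - (y + 1) by omega)
        omega
      · omega
  · obtain ⟨hp₀, hp₁, hp₂⟩ := hp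
    simp only [mem_pathVertices, show r - p.2 + 1 ≠ r - y by omega, if_false]
    refine ⟨hp₀, hp₁, ?_⟩
    split_ifs <;> omega
  · simp only [mem_pathVertices, show r - (y + 1) + 1 = r - y by omega,
      show r - (y + 1) ≠ r - y by omega, if_true, if_false, hk']
    omega

/-- The partition follows the walk up to `z m` and then runs right to the wall `x = k`. -/
theorem IsWalk.exists_isPartition_prefix (hz : IsWalk z len) (h0 : z 0 = (0, 0))
    (hlast : z len = (n - r, r)) {m : ℕ} (hm : m ≤ len) :
    ∃ lam, IsPartition n r lam ∧ (∀ i ≤ m, z i ∈ pathVertices r lam) ∧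
      lam (r - (z m).2) = n - r := by
  induction m with
  | zero =>
    refine ⟨fun t => if t ≤ r then n - r else 0,
      ⟨by simp, fun t ht => by simp [show ¬t ≤ r by omega],
        fun t => by dsimp only; split_ifs <;> omega⟩, fun i hi => ?_, by simp [h0]⟩
    obtain rfl : i = 0 := by omega
    simp [mem_pathVertices, h0]
  | succ m ih =>
    obtain ⟨lam, hlam, hV, hk⟩ := ih (by omega)
    have hbound := hz.le (show m + 1 ≤ len by omega) le_rfl
    rw [hlast, Prod.le_def] at hbound
    have hprev : ∀ i ≤ m, z i ≤ z m := fun i hi => hz.le hi (by omega)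
    rcases hz m (by omega) with hs | hs <;> rw [hs] at hbound ⊢ <;> simp only at hbound ⊢
    · refine ⟨lam, hlam, fun i hi => ?_, hk⟩
      rcases hi.lt_or_eq with hi | rfl
      · exact hV i (by omega)
      · obtain ⟨hy, hx₁, -⟩ := hV m le_rfl
        rw [hs, mem_pathVertices]
        exact ⟨hy, by simp only; omega, by simp only; omega⟩
    · obtain ⟨lam', hlam', hV', hnew, hk'⟩ := hlam.exists_turn_up (by omega) (hV m le_rfl) hk
      refine ⟨lam', hlam', fun i hi => ?_, hk'⟩
      rcases hi.lt_or_eq with hi | rfl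
      · have := Prod.le_def.1 (hprev i (by omega))
        exact hV' _ (hV i (by omega)) (by omega)
      · exact hs ▸ hnew

theorem existsUnique_of_full_walk (hz : IsWalk z len) (h0 : z 0 = (0, 0))
    (hlast : z len = (n - r, r)) (hint : ∀ i ≤ len, z i ∉ internalV n r) :
    ∃! lam, IsPartition n r lam ∧ IsCrossingPath n r c lam ∧
      ∀ i ≤ len, z i ∈ pathVertices r lam := by
  obtain ⟨lam, hlam, hV, -⟩ := hz.exists_isPartition_prefix h0 hlast le_rfl
  have hlen : n - r + r = len := by simpa [h0, hlast] using hz.add_eq (le_refl len)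
  have hrange : ∀ p ∈ pathVertices r lam, ∃ i ≤ len, z i = p := fun p hp => by
    have := Prod.le_def.1 (hlam.le_of_mem_pathVertices hp)
    refine ⟨p.1 + p.2, by omega, hlam.eq_of_mem_pathVertices (hV _ (by omega)) hp ?_⟩
    rw [hz.add_eq (by omega), h0, zero_add, zero_add]
  refine ⟨lam, ⟨hlam, hlam.isCrossingPath_of_disjoint fun p hp => ?_, hV⟩,
    fun lam' hlam' => (hlam.eq_of_pathVertices_subset hlam'.1 fun p hp => ?_).symm⟩
  · obtain ⟨i, hi, rfl⟩ := hrange p hp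
    exact hint i hi
  · obtain ⟨i, hi, rfl⟩ := hrange p hp
    exact hlam'.2.2 i hi

theorem mem_ladderV_iff :
    p ∈ ladderV n r ↔ p = (0, 0) ∨ p = (n - r, r) ∨ p ∈ internalV n r := by
  simp only [ladderV, internalV, Set.mem_union, Set.mem_insert_iff, Set.mem_singleton_iff, or_assoc]

theorem existsUnique_mem_pathEdges
    (he : e.1 ∈ internalV n r ∨ edgeHead e ∈ internalV n r) :
    ∃! lam, IsPartition n r lam ∧ IsCrossingPath n r c lam ∧ e ∈ pathEdges r lam := by
  simp only [← and_assoc, isPartition_and_isCrossingPath_iff]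
  obtain ⟨⟨x, y⟩, _ | _⟩ := e <;>
    simp only [internalV, edgeHead, Set.mem_ofPred_eq, Bool.false_eq_true, if_true, if_false] at he
  · refine (existsUnique_congr fun lam => and_congr_right fun _ => ?_).1
      (existsUnique_isCompatiblePartition_around (c := c) (t := r - y) (x := x) (by omega)
        (by omega) (by omega))
    rw [mem_pathEdges_false]
    omega
  · refine (existsUnique_congr fun lam => and_congr_right fun _ => ?_).1
      (existsUnique_isCompatiblePartition_eq (c := c) (t := r - y) (x := x) (by omega) (by omega)
        (by omega) (.inr (by omega)) (.inr (by omega)))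
    rw [mem_pathEdges_true]
    omega

def IsKeyEdge (n r : ℕ) (A : Set ((ℕ × ℕ) × Bool)) (e : (ℕ × ℕ) × Bool) : Prop :=
  (e.1 ∈ internalV n r ∨ edgeHead e ∈ internalV n r) ∧
    ∀ lam, IsPartition n r lam → (A ⊆ pathEdges r lam ↔ e ∈ pathEdges r lam)

theorem IsKeyEdge.existsUnique {A : Set ((ℕ × ℕ) × Bool)} (h : IsKeyEdge n r A e) :
    ∃! lam, IsPartition n r lam ∧ IsCrossingPath n r c lam ∧ A ⊆ pathEdges r lam :=
  (existsUnique_congr fun lam => and_congr_right fun hlam => and_congr_right fun _ =>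
    h.2 lam hlam).2 (existsUnique_mem_pathEdges h.1)

theorem exists_isKeyEdge_of_start_mem_internalV (hz : IsWalk z len) (hlen : 0 < len)
    (hbox : ∀ i ≤ len, (z i).1 ≤ n - r ∧ (z i).2 ≤ r)
    (hmid : ∀ i, 0 < i → i < len → z i ∉ ladderV n r) (h0 : z 0 ∈ internalV n r) :
    ∃ e, IsKeyEdge n r (walkEdges z len) e := by
  obtain ⟨e, he, he₁, he₂⟩ := hz.exists_mem_walkEdges hlen
  refine ⟨e, .inl (he₁ ▸ h0), fun lam hlam => ⟨fun hsub => hsub he, fun heE => ?_⟩⟩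
  obtain ⟨hv₀, hv₁⟩ := hlam.mem_pathEdges_iff.1 heE
  rw [he₁] at hv₀
  rw [he₂] at hv₁
  refine (hlam.walkEdges_subset_iff hz hlen).2 fun i hi => ?_
  rcases Nat.lt_trichotomy i 1 with hi1 | rfl | hi1
  · exact (show i = 0 by omega) ▸ hv₀
  · exact hv₁
  have h01 := Prod.le_def.1 (hz.le (Nat.zero_le 1) (by omega))
  have hwall : (z 1).1 = n - r ∨ (z 1).2 = r := by
    by_contra! hne
    have := hbox 1 (by omega)
    obtain ⟨h₁, h₂, h₃, h₄⟩ := h0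
    exact hmid 1 one_pos (by omega) (mem_ladderV_iff.2 (.inr (.inr ⟨by omega, by omega, by omega,
      by omega⟩)))
  exact hlam.mem_pathVertices_of_le_of_upperRight hv₁ (hz.le (by omega) hi)
    (Prod.le_def.2 (hbox i hi)) hwall

theorem exists_isKeyEdge_of_end_mem_internalV (hz : IsWalk z len) (hlen : 0 < len)
    (hmid : ∀ i, 0 < i → i < len → z i ∉ ladderV n r) (hlast : z len ∈ internalV n r) :
    ∃ e, IsKeyEdge n r (walkEdges z len) e := by
  obtain ⟨e, he, he₁, he₂⟩ := hz.exists_mem_walkEdges (Nat.sub_one_lt hlen.ne')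
  rw [Nat.sub_add_cancel hlen] at he₂
  refine ⟨e, .inr (he₂ ▸ hlast), fun lam hlam => ⟨fun hsub => hsub he, fun heE => ?_⟩⟩
  obtain ⟨hv₀, hv₁⟩ := hlam.mem_pathEdges_iff.1 heE
  rw [he₁] at hv₀
  rw [he₂] at hv₁
  refine (hlam.walkEdges_subset_iff hz hlen).2 fun i hi => ?_
  rcases Nat.lt_trichotomy i (len - 1) with hi1 | rfl | hi1
  · have h1 := Prod.le_def.1 (hz.le (Nat.sub_le len 1) le_rfl)
    have hwall : (z (len - 1)).1 = 0 ∨ (z (len - 1)).2 = 0 := by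
      by_contra! hne
      obtain ⟨h₁, h₂, h₃, h₄⟩ := hlast
      exact hmid (len - 1) (by omega) (by omega)
        (mem_ladderV_iff.2 (.inr (.inr ⟨by omega, by omega, by omega, by omega⟩)))
    exact hlam.mem_pathVertices_of_le_of_lowerLeft hv₀ (hz.le hi1.le (by omega)) hwall
  · exact hv₀
  · exact (show i = len by omega) ▸ hv₁

theorem existsUnique_of_isArrow {A : Set ((ℕ × ℕ) × Bool)} (hA : IsArrow n r A) :
    ∃! lam, IsPartition n r lam ∧ IsCrossingPath n r c lam ∧ A ⊆ pathEdges r lam := by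
  obtain ⟨len, z, hlen, hz, hbox, h0, hlast, hmid, rfl⟩ := hA
  replace hz : IsWalk z len := hz
  rw [walkEdges_eq]
  rw [mem_ladderV_iff] at h0 hlast
  rcases h0 with h0 | h0 | h0
  · rcases hlast with hlast | hlast | hlast
    · have := hz.add_eq (le_refl len)
      rw [h0, hlast] at this
      dsimp only at this
      omega
    · refine (existsUnique_congr fun lam => and_congr_right fun hlam => and_congr_right fun _ =>
        hlam.walkEdges_subset_iff hz hlen).2 (existsUnique_of_full_walk hz h0 hlast fun i hi => ?_)
      rcases Nat.eq_zero_or_pos i with rfl | hi0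
      · simp [h0, internalV]
      rcases hi.lt_or_eq with hi | rfl
      · exact fun h => hmid i hi0 hi (mem_ladderV_iff.2 (.inr (.inr h)))
      · simp [hlast, internalV]
    · obtain ⟨e, he⟩ := exists_isKeyEdge_of_end_mem_internalV hz hlen hmid hlast
      exact he.existsUnique
  · have := hbox 1 hlen
    rcases hz 0 hlen with h | h <;> rw [h, h0] at this <;> simp at this
  · obtain ⟨e, he⟩ := exists_isKeyEdge_of_start_mem_internalV hz hlen hbox hmid h0
    exact he.existsUnique

end

/-- For every crossing diagram `c`, the set of paths of `c` has exactly `n`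
elements, and every arrow of the ladder quiver is contained in the path of exactly one
path of `c`: the paths of a crossing diagram form a 1-covering of the ladder quiver. -/
theorem crossing_diagram_one_covering (n r : ℕ) (hr : 1 ≤ r) (hrn : r < n)
    (c : ℕ × ℕ → Bool) :
    {lam : ℕ → ℕ | IsPartition n r lam ∧ IsCrossingPath n r c lam}.ncard = n ∧
    ∀ A, IsArrow n r A →
      ∃! lam : ℕ → ℕ, IsPartition n r lam ∧ IsCrossingPath n r c lam ∧
        A ⊆ pathEdges r lam :=
  ⟨ncard_setOf_isCrossingPath hr hrn, fun _ hA => existsUnique_of_isArrow hA⟩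
end

section
/- The set {χ_λ : λ ∈ 𝒜(n,r)} generates ℤ^B as an abelian group. -/
/-- `χ_λ ∈ ℤ^B`: box `(t,j)` corresponds to the index `(t-1, j-1) : Fin r × Fin (n-r)`. -/
def chi (n r : ℕ) (lam : ℕ → ℕ) : Fin r × Fin (n - r) → ℤ := fun p =>
  if lam (p.1.1 + 1) = p.2.1 + 1 ∧ (p.2.1 + 1 < n - r ∨ lam (p.1.1 + 2) < n - r) then 1 else 0

/-- `λ` is an arrow partition: a rectangle `(a^r)`, a two-step partition
`((a+1)^c, a^{r-c})`, or a hook-like partition `(k^a, b, 0^{r-a-1})`. -/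
def IsArrowPartition (n r : ℕ) (lam : ℕ → ℕ) : Prop :=
  IsPartition n r lam ∧
  ((∃ a, a ≤ n - r ∧ ∀ t, 1 ≤ t → t ≤ r → lam t = a) ∨
   (∃ a c, 1 ≤ a ∧ a + 1 ≤ n - r ∧ 1 ≤ c ∧ c + 1 ≤ r ∧
      (∀ t, 1 ≤ t → t ≤ c → lam t = a + 1) ∧ (∀ t, c + 1 ≤ t → t ≤ r → lam t = a)) ∨
   (∃ a b, a + 2 ≤ r ∧ 1 ≤ b ∧ b ≤ n - r ∧
      (∀ t, 1 ≤ t → t ≤ a → lam t = n - r) ∧ lam (a + 1) = b ∧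
      (∀ t, a + 2 ≤ t → t ≤ r → lam t = 0)))

lemma AddSubgroup.eq_top_of_forall_single_one_mem {ι : Type*} [Finite ι] [DecidableEq ι]
    (H : AddSubgroup (ι → ℤ)) (h : ∀ i, Pi.single i 1 ∈ H) : H = ⊤ :=
  (H.eq_top_iff').2 fun f => Pi.single_induction (· ∈ H) f H.zero_mem (fun _ _ => H.add_mem)
    fun i m => by simpa [← Pi.single_smul] using H.zsmul_mem (h i) m

namespace ArrowPartition

/-- `(k^a, b, 0^{r-a-1})`; for `b = 0` this is `(k^a, 0^{r-a})`. -/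
def hook (n r a b : ℕ) : ℕ → ℕ := fun t => if t ≤ a then n - r else if t = a + 1 then b else 0

def rectangle (n r a : ℕ) : ℕ → ℕ := fun t => if t = 0 then n - r else if t ≤ r then a else 0

variable {n r : ℕ}

lemma chi_hook_zero (t : Fin r) (j : Fin (n - r)) (hj : j.1 + 1 = n - r) :
    chi n r (hook n r (t + 1) 0) = Pi.single (t, j) 1 := by
  ext ⟨s, i⟩
  simp only [chi, hook, Pi.single_apply, Prod.ext_iff, Fin.ext_iff]
  grind

lemma chi_hook (t : Fin r) (j : Fin (n - r)) (hj : j.1 + 1 < n - r) :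
    chi n r (hook n r t (j + 1)) = Pi.single (t, j) 1 + chi n r (hook n r t 0) := by
  ext ⟨s, i⟩
  simp only [chi, hook, Pi.add_apply, Pi.single_apply, Prod.ext_iff, Fin.ext_iff]
  grind

lemma chi_rectangle (j : Fin (n - r)) (hj : j.1 + 1 < n - r) :
    chi n r (rectangle n r (j + 1)) = ∑ t, Pi.single (t, j) 1 := by
  ext ⟨s, i⟩
  simp only [chi, rectangle, Finset.sum_apply, Pi.single_apply, Prod.mk.injEq, ite_and,
    Finset.sum_ite_eq, Finset.mem_univ, if_true]
  grind [Fin.ext_iff]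

lemma isPartition_hook {a b : ℕ} (hb : b ≤ n - r) (ha : a + 1 ≤ r ∨ a ≤ r ∧ b = 0) :
    IsPartition n r (hook n r a b) :=
  ⟨by simp [hook], fun t ht => by grind [hook], fun t => by grind [hook]⟩

lemma isArrowPartition_rectangle {a : ℕ} (ha : a ≤ n - r) :
    IsArrowPartition n r (rectangle n r a) :=
  ⟨⟨by simp [rectangle], fun t ht => by grind [rectangle], fun t => by grind [rectangle]⟩,
    .inl ⟨a, ha, fun t ht htr => by grind [rectangle]⟩⟩

lemma isArrowPartition_hook {a b : ℕ} (ha : a + 2 ≤ r) (hb : 1 ≤ b) (hbk : b ≤ n - r) :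
    IsArrowPartition n r (hook n r a b) :=
  ⟨isPartition_hook hbk (.inl (by omega)), .inr <| .inr ⟨a, b, ha, hb, hbk,
    fun t _ ht => by grind [hook], by grind [hook], fun t ht _ => by grind [hook]⟩⟩

lemma isArrowPartition_hook_zero {a : ℕ} (hk : 0 < n - r) (ha : a ≤ r) :
    IsArrowPartition n r (hook n r a 0) := by
  refine ⟨isPartition_hook (Nat.zero_le _) (.inr ⟨ha, rfl⟩), ?_⟩
  rcases Nat.eq_zero_or_pos a with rfl | ha0
  · exact .inl ⟨0, Nat.zero_le _, fun t ht _ => by grind [hook]⟩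
  rcases ha.eq_or_lt with har | har
  · exact .inl ⟨n - r, le_rfl, fun t _ ht => by grind [hook]⟩
  exact .inr <| .inr ⟨a - 1, n - r, by omega, hk, le_rfl, fun t _ ht => by grind [hook],
    by grind [hook], fun t ht _ => by grind [hook]⟩

def arrowSpan (n r : ℕ) : AddSubgroup (Fin r × Fin (n - r) → ℤ) :=
  AddSubgroup.closure {v | ∃ lam, IsArrowPartition n r lam ∧ v = chi n r lam}

lemma chi_mem_arrowSpan {lam : ℕ → ℕ} (h : IsArrowPartition n r lam) :
    chi n r lam ∈ arrowSpan n r :=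
  AddSubgroup.subset_closure ⟨lam, h, rfl⟩

lemma single_mem_arrowSpan_of_last_column (t : Fin r) (j : Fin (n - r)) (hj : j.1 + 1 = n - r) :
    Pi.single (t, j) 1 ∈ arrowSpan n r := by
  rw [← chi_hook_zero t j hj]
  exact chi_mem_arrowSpan (isArrowPartition_hook_zero j.pos t.2)

lemma single_mem_arrowSpan_of_lt_last_row (t : Fin r) (j : Fin (n - r)) (ht : t.1 + 1 < r) :
    Pi.single (t, j) 1 ∈ arrowSpan n r := by
  rcases Nat.lt_or_eq_of_le j.2 with hj | hj
  · have h := sub_mem (chi_mem_arrowSpan (isArrowPartition_hook ht j.1.succ_pos hj.le))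
      (chi_mem_arrowSpan (isArrowPartition_hook_zero j.pos t.2.le))
    rwa [chi_hook t j hj, add_sub_cancel_right] at h
  · exact single_mem_arrowSpan_of_last_column t j hj

lemma single_mem_arrowSpan_of_last_row (t : Fin r) (j : Fin (n - r)) (ht : t.1 + 1 = r) :
    Pi.single (t, j) 1 ∈ arrowSpan n r := by
  rcases Nat.lt_or_eq_of_le j.2 with hj | hj
  · have column_mem := chi_mem_arrowSpan (isArrowPartition_rectangle hj.le)
    rw [chi_rectangle j hj, ← Finset.add_sum_erase _ _ (Finset.mem_univ t)] at column_mem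
    refine (AddSubgroup.add_mem_cancel_right _ (sum_mem fun s hs => ?_)).1 column_mem
    have hst : s.1 ≠ t.1 := Fin.val_ne_of_ne (Finset.ne_of_mem_erase hs)
    exact single_mem_arrowSpan_of_lt_last_row s j (by omega)
  · exact single_mem_arrowSpan_of_last_column t j hj

lemma single_mem_arrowSpan (p : Fin r × Fin (n - r)) : Pi.single p 1 ∈ arrowSpan n r := by
  obtain ⟨t, j⟩ := p
  rcases Nat.lt_or_eq_of_le t.2 with ht | ht
  · exact single_mem_arrowSpan_of_lt_last_row t j ht
  · exact single_mem_arrowSpan_of_last_row t j ht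

end ArrowPartition

theorem chi_arrow_partitions_span_general (n r : ℕ) :
    AddSubgroup.closure {v : Fin r × Fin (n - r) → ℤ |
      ∃ lam, IsArrowPartition n r lam ∧ v = chi n r lam} = ⊤ :=
  AddSubgroup.eq_top_of_forall_single_one_mem _ ArrowPartition.single_mem_arrowSpan

/-- the set `{χ_λ : λ ∈ 𝒜(n,r)}` generates `ℤ^B` as an abelian group. -/
theorem chi_arrow_partitions_span (n r : ℕ) (hr : 1 ≤ r) (hrn : r < n) :
    AddSubgroup.closure {v : Fin r × Fin (n - r) → ℤ |
      ∃ lam, IsArrowPartition n r lam ∧ v = chi n r lam} = ⊤ :=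
  chi_arrow_partitions_span_general n r
end
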